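/- Every simple locally finite associative algebra A over a field F possesses a perfect local system, i.e., a local system {B_α}_{α∈Γ} such that B_α · B_α = B_α for every α. Specifically, if {A_α}_{α∈Γ} is any local system and A_α^∞ = ∩_{i≥1} A_α^i, then {A_α^∞}_{α∈Γ} is a perfect local system of A. -/
import Mathlib

/-- `B` is (the underlying submodule of) a subalgebra: closed under multiplication. -/
def IsSubalg {F A : Type*} [Field F] [NonUnitalRing A] [Module F A]
    (B : Submodule F A) : Prop :=
  ∀ x ∈ B, ∀ y ∈ B, x * y ∈ B

/-- `I` is a two-sided ideal of the subalgebra `B`. -/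
def IsIdealIn {F A : Type*} [Field F] [NonUnitalRing A] [Module F A]
    (I B : Submodule F A) : Prop :=
  I ≤ B ∧ ∀ b ∈ B, ∀ x ∈ I, b * x ∈ I ∧ x * b ∈ I

/-- Product of two submodules of a (possibly non-unital) algebra: the span of products. -/
def prodSub {F A : Type*} [Field F] [NonUnitalRing A] [Module F A]
    (M N : Submodule F A) : Submodule F A :=
  Submodule.span F {z : A | ∃ x ∈ M, ∃ y ∈ N, z = x * y}

/-- `pows B i` is the power `B^(i+1)`: `pows B 0 = B`, `pows B (i+1) = B * pows B i`. -/
def pows {F A : Type*} [Field F] [NonUnitalRing A] [Module F A]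
    (B : Submodule F A) : ℕ → Submodule F A
  | 0 => B
  | (i + 1) => prodSub B (pows B i)

/-- A family of finite-dimensional subalgebras is a local system: union is everything
and the family is directed under inclusion. -/
def IsLocalSystem {F A : Type*} [Field F] [NonUnitalRing A] [Module F A] {Γ : Type*}
    (S : Γ → Submodule F A) : Prop :=
  (∀ α, IsSubalg (S α)) ∧ (∀ α, FiniteDimensional F (S α)) ∧
    (∀ x : A, ∃ α, x ∈ S α) ∧ ∀ α β, ∃ γ, S α ≤ S γ ∧ S β ≤ S γ

/-- Every finite subset is contained in a finite-dimensional subalgebra. -/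
def IsLocallyFinite (F A : Type*) [Field F] [NonUnitalRing A] [Module F A] : Prop :=
  ∀ s : Finset A, ∃ B : Submodule F A, IsSubalg B ∧ FiniteDimensional F B ∧ ∀ x ∈ s, x ∈ B

/-- A (possibly non-unital) algebra is simple: `A² ≠ 0` and no nontrivial two-sided ideals. -/
def IsSimpleAlg (F A : Type*) [Field F] [NonUnitalRing A] [Module F A] : Prop :=
  (∃ x y : A, x * y ≠ 0) ∧ ∀ I : Submodule F A, IsIdealIn I ⊤ → I = ⊥ ∨ I = ⊤

/-- `R` is the radical of the finite-dimensional algebra `B`: its largest nilpotent ideal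
(which coincides with the Jacobson radical for finite-dimensional algebras). -/
def IsRadicalOf {F A : Type*} [Field F] [NonUnitalRing A] [Module F A]
    (R B : Submodule F A) : Prop :=
  IsIdealIn R B ∧ (∃ n, pows R n = ⊥) ∧
    ∀ I, IsIdealIn I B → (∃ n, pows I n = ⊥) → I ≤ R

/-- `I` is an ideal of codimension 1 in `B`. -/
def CodimOneIn {F A : Type*} [Field F] [NonUnitalRing A] [Module F A]
    (I B : Submodule F A) : Prop :=
  I ≤ B ∧ I ≠ B ∧ ∃ v : A, B ≤ I ⊔ Submodule.span F {v}

/-- The algebra `B` is 1-perfect: it has no two-sided ideal of codimension 1. -/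
def Is1Perfect {F A : Type*} [Field F] [NonUnitalRing A] [Module F A]
    (B : Submodule F A) : Prop :=
  ¬ ∃ I : Submodule F A, IsIdealIn I B ∧ CodimOneIn I B

/-- `Q` is the largest 1-perfect ideal (the 1-perfect radical) of the algebra `B`. -/
def IsLargest1PerfectIdealIn {F A : Type*} [Field F] [NonUnitalRing A] [Module F A]
    (Q B : Submodule F A) : Prop :=
  IsIdealIn Q B ∧ Is1Perfect Q ∧ ∀ I, IsIdealIn I B → Is1Perfect I → I ≤ Q

/-- `B` is a simple subalgebra: nonzero products and no nontrivial ideals of itself. -/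
def IsSimpleSubalg {F A : Type*} [Field F] [NonUnitalRing A] [Module F A]
    (B : Submodule F A) : Prop :=
  (∃ x ∈ B, ∃ y ∈ B, x * y ≠ 0) ∧ ∀ I : Submodule F A, IsIdealIn I B → I = ⊥ ∨ I = B

set_option linter.unusedSectionVars false

section Aux
variable {F A : Type*} [Field F] [NonUnitalRing A] [Module F A]
  [IsScalarTower F A A] [SMulCommClass F A A]

lemma mem_prodSub {M N : Submodule F A} {x y : A} (hx : x ∈ M) (hy : y ∈ N) :
    x * y ∈ prodSub M N := Submodule.subset_span ⟨x, hx, y, hy, rfl⟩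

lemma prodSub_le {M N P : Submodule F A} (h : ∀ x ∈ M, ∀ y ∈ N, x * y ∈ P) :
    prodSub M N ≤ P := Submodule.span_le.2 (by rintro z ⟨x, hx, y, hy, rfl⟩; exact h x hx y hy)

lemma prodSub_mono {M M' N N' : Submodule F A} (h1 : M ≤ M') (h2 : N ≤ N') :
    prodSub M N ≤ prodSub M' N' := prodSub_le fun x hx y hy => mem_prodSub (h1 hx) (h2 hy)

lemma prodSub_assoc (M N P : Submodule F A) :
    prodSub (prodSub M N) P = prodSub M (prodSub N P) := by
  apply le_antisymm
  · refine prodSub_le fun z hz p hp => ?_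
    induction hz using Submodule.span_induction with
    | mem z hz => obtain ⟨x, hx, y, hy, rfl⟩ := hz
                  rw [mul_assoc]; exact mem_prodSub hx (mem_prodSub hy hp)
    | zero => rw [zero_mul]; exact zero_mem _
    | add a b _ _ ha hb => rw [add_mul]; exact add_mem ha hb
    | smul c a _ ha => rw [smul_mul_assoc]; exact Submodule.smul_mem _ _ ha
  · refine prodSub_le fun x hx z hz => ?_
    induction hz using Submodule.span_induction with
    | mem z hz => obtain ⟨y, hy, p, hp, rfl⟩ := hz
                  rw [← mul_assoc]; exact mem_prodSub (mem_prodSub hx hy) hp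
    | zero => rw [mul_zero]; exact zero_mem _
    | add a b _ _ ha hb => rw [mul_add]; exact add_mem ha hb
    | smul c a _ ha => rw [mul_smul_comm]; exact Submodule.smul_mem _ _ ha

lemma prodSub_sup_le {M N P : Submodule F A} :
    prodSub M (N ⊔ P) ≤ prodSub M N ⊔ prodSub M P := by
  refine prodSub_le fun x hx y hy => ?_
  obtain ⟨n, hn, p, hp, rfl⟩ := Submodule.mem_sup.1 hy
  rw [mul_add]
  exact Submodule.add_mem_sup (mem_prodSub hx hn) (mem_prodSub hx hp)

lemma pows_le_self {B : Submodule F A} (hB : IsSubalg B) : ∀ i, pows B i ≤ B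
  | 0 => le_rfl
  | (i + 1) => le_trans (prodSub_mono le_rfl (pows_le_self hB i))
      (prodSub_le fun x hx y hy => hB x hx y hy)

lemma pows_succ_le {B : Submodule F A} (hB : IsSubalg B) : ∀ i, pows B (i + 1) ≤ pows B i
  | 0 => prodSub_le fun x hx y hy => hB x hx y hy
  | (i + 1) => prodSub_mono le_rfl (pows_succ_le hB i)

lemma pows_antitone {B : Submodule F A} (hB : IsSubalg B) {i j : ℕ} (h : i ≤ j) :
    pows B j ≤ pows B i := by
  induction j with
  | zero => simp_all
  | succ j ih =>
      rcases Nat.lt_or_ge i (j + 1) with h' | h'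
      · exact le_trans (pows_succ_le hB j) (ih (Nat.lt_succ_iff.1 h'))
      · have : i = j + 1 := le_antisymm h h'
        subst this; exact le_rfl

lemma pows_mono {B C : Submodule F A} (h : B ≤ C) : ∀ i, pows B i ≤ pows C i
  | 0 => h
  | (i + 1) => prodSub_mono h (pows_mono h i)

lemma prodSub_pows (B : Submodule F A) : ∀ m n, prodSub (pows B m) (pows B n) = pows B (m + n + 1)
  | 0, n => by simp [pows, Nat.zero_add]
  | (m + 1), n => by
      show prodSub (prodSub B (pows B m)) (pows B n) = _
      rw [prodSub_assoc, prodSub_pows B m n]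
      show pows B (m + n + 1 + 1) = pows B (m + 1 + n + 1)
      congr 1; omega

/-- Stabilization of the chain of powers of a finite-dimensional subalgebra. -/
lemma pows_stab {B : Submodule F A} (hB : IsSubalg B) (hfd : FiniteDimensional F B) :
    ∃ n, ∀ m, pows B (n + m) = pows B n := by
  haveI := hfd
  have hfdi : ∀ i, FiniteDimensional F (pows B i) :=
    fun i => Submodule.finiteDimensional_of_le (pows_le_self hB i)
  set f : ℕ → ℕ := fun i => Module.finrank F (pows B i) with hf
  obtain ⟨m, hmem, hmin⟩ := Nat.lt_wfRel.wf.has_min (Set.range f) ⟨f 0, 0, rfl⟩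
  obtain ⟨n, rfl⟩ := hmem
  haveI := hfdi n
  have hstep : pows B (n + 1) = pows B n := by
    have h1 : f n ≤ f (n + 1) := Nat.not_lt.1 (hmin _ ⟨n + 1, rfl⟩)
    exact Submodule.eq_of_le_of_finrank_le (pows_succ_le hB n) h1
  refine ⟨n, fun m => ?_⟩
  induction m with
  | zero => rfl
  | succ m ih =>
      show pows B (n + m + 1) = pows B n
      show prodSub B (pows B (n + m)) = pows B n
      rw [ih]
      exact hstep

/-- The infimum of powers of a f.d. subalgebra is a stabilized power, and is perfect. -/
lemma perfect_inf {B : Submodule F A} (hB : IsSubalg B) (hfd : FiniteDimensional F B) :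
    prodSub (⨅ i, pows B i) (⨅ i, pows B i) = ⨅ i, pows B i := by
  obtain ⟨n, hn⟩ := pows_stab hB hfd
  have heq : (⨅ i, pows B i) = pows B n := by
    refine le_antisymm (iInf_le _ n) (le_iInf fun i => ?_)
    rcases le_or_gt i n with h | h
    · exact pows_antitone hB h
    · have : i = n + (i - n) := by omega
      rw [this, hn (i - n)]
  rw [heq, prodSub_pows]
  have : n + n + 1 = n + (n + 1) := by omega
  rw [this, hn (n + 1)]

end Aux

theorem perfect_local_system_exists {F A : Type*} [Field F] [NonUnitalRing A] [Module F A]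
    [IsScalarTower F A A] [SMulCommClass F A A]
    (hsimple : IsSimpleAlg F A) (hlf : IsLocallyFinite F A)
    {Γ : Type*} (S : Γ → Submodule F A) (hS : IsLocalSystem S) :
    IsLocalSystem (fun α => ⨅ i, pows (S α) i) ∧
      ∀ α, prodSub (⨅ i, pows (S α) i) (⨅ i, pows (S α) i) = ⨅ i, pows (S α) i := by
  obtain ⟨hsub, hfd, hcov, hdir⟩ := hS
  -- basic facts about the family of infima
  set T : Γ → Submodule F A := fun α => ⨅ i, pows (S α) i with hT
  have hTle : ∀ α, T α ≤ S α := fun α => iInf_le _ 0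
  have hTmono : ∀ {α β}, S α ≤ S β → T α ≤ T β := by
    intro α β h
    exact le_iInf fun i => le_trans (iInf_le _ i) (pows_mono h i)
  have hTdir : Directed (· ≤ ·) T := by
    intro α β
    obtain ⟨γ, h1, h2⟩ := hdir α β
    exact ⟨γ, hTmono h1, hTmono h2⟩
  have hΓ : Nonempty Γ := ⟨(hcov 0).choose⟩
  have hTsub : ∀ α, IsSubalg (T α) := by
    intro α x hx y hy
    refine Submodule.mem_iInf _ |>.2 fun i => ?_
    have hx0 : x ∈ S α := hTle α hx
    have hyi : y ∈ pows (S α) i := Submodule.mem_iInf _ |>.1 hy i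
    cases i with
    | zero => exact hsub α x hx0 y hyi
    | succ i =>
        have hyi' : y ∈ pows (S α) i := Submodule.mem_iInf _ |>.1 hy i
        exact mem_prodSub hx0 hyi'
  -- U is a two-sided ideal of A
  set U : Submodule F A := ⨆ α, T α with hU
  have hmemU : ∀ {x : A}, x ∈ U ↔ ∃ α, x ∈ T α := fun {x} =>
    Submodule.mem_iSup_of_directed T hTdir
  have hUideal : IsIdealIn U ⊤ := by
    refine ⟨le_top, fun b _ x hx => ?_⟩
    obtain ⟨α, hxα⟩ := hmemU.1 hx
    obtain ⟨β, hbβ⟩ := hcov b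
    obtain ⟨γ, hγ1, hγ2⟩ := hdir α β
    have hxγ : x ∈ T γ := hTmono hγ1 hxα
    have hbγ : b ∈ S γ := hγ2 hbβ
    constructor
    · refine hmemU.2 ⟨γ, Submodule.mem_iInf _ |>.2 fun i => ?_⟩
      cases i with
      | zero => exact hsub γ b hbγ x (hTle γ hxγ)
      | succ i => exact mem_prodSub hbγ (Submodule.mem_iInf _ |>.1 hxγ i)
    · refine hmemU.2 ⟨γ, Submodule.mem_iInf _ |>.2 fun i => ?_⟩
      cases i with
      | zero => exact hsub γ x (hTle γ hxγ) b hbγ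
      | succ i =>
          have : x * b ∈ prodSub (pows (S γ) i) (pows (S γ) 0) :=
            mem_prodSub (Submodule.mem_iInf _ |>.1 hxγ i) hbγ
          rwa [prodSub_pows] at this
  -- a nonzero element of U
  obtain ⟨u, v, huv⟩ := hsimple.1
  set x₀ : A := u * v with hx₀def
  have hx₀ : x₀ ≠ 0 := huv
  set X : Submodule F A := Submodule.span F {x₀} with hX
  have hx₀X : x₀ ∈ X := Submodule.mem_span_singleton_self _
  set P1 : Submodule F A := prodSub ⊤ X with hP1
  set P2 : Submodule F A := prodSub X ⊤ with hP2
  set P3 : Submodule F A := prodSub P1 ⊤ with hP3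
  set J : Submodule F A := P1 ⊔ P2 ⊔ P3 with hJ
  have hJideal : IsIdealIn J ⊤ := by
    have hl1 : prodSub ⊤ P1 ≤ P1 := by
      rw [hP1, ← prodSub_assoc]
      exact prodSub_mono (prodSub_le fun x _ y _ => trivial) le_rfl
    have hl2 : prodSub ⊤ P2 ≤ P3 := by
      rw [hP2, ← prodSub_assoc, hP3, hP1]
    have hl3 : prodSub ⊤ P3 ≤ P3 := by
      rw [hP3, ← prodSub_assoc]
      exact prodSub_mono hl1 le_rfl
    have hr1 : prodSub P1 ⊤ ≤ P3 := le_of_eq hP3.symm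
    have hr2 : prodSub P2 ⊤ ≤ P2 := by
      rw [hP2, prodSub_assoc]
      exact prodSub_mono le_rfl (prodSub_le fun x _ y _ => trivial)
    have hr3 : prodSub P3 ⊤ ≤ P3 := by
      rw [hP3, prodSub_assoc]
      exact prodSub_mono le_rfl (prodSub_le fun x _ y _ => trivial)
    have hleft : prodSub ⊤ J ≤ J := by
      rw [hJ]
      calc prodSub ⊤ (P1 ⊔ P2 ⊔ P3)
          ≤ prodSub ⊤ (P1 ⊔ P2) ⊔ prodSub ⊤ P3 := prodSub_sup_le
        _ ≤ (prodSub ⊤ P1 ⊔ prodSub ⊤ P2) ⊔ prodSub ⊤ P3 :=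
            sup_le_sup_right prodSub_sup_le _
        _ ≤ (P1 ⊔ P3) ⊔ P3 := sup_le_sup (sup_le_sup hl1 hl2) hl3
        _ ≤ P1 ⊔ P2 ⊔ P3 := by
            apply sup_le (sup_le _ _) _
            · exact le_sup_of_le_left le_sup_left
            · exact le_sup_right
            · exact le_sup_right
    have hright : prodSub J ⊤ ≤ J := by
      rw [hJ]
      refine prodSub_le fun z hz a ha => ?_
      rcases Submodule.mem_sup.1 hz with ⟨y, hy, p3, hp3, rfl⟩
      rcases Submodule.mem_sup.1 hy with ⟨p1, hp1, p2, hp2, rfl⟩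
      have h1 : p1 * a ∈ P3 := hr1 (mem_prodSub hp1 trivial)
      have h2 : p2 * a ∈ P2 := hr2 (mem_prodSub hp2 trivial)
      have h3 : p3 * a ∈ P3 := hr3 (mem_prodSub hp3 trivial)
      rw [add_mul, add_mul]
      refine add_mem (add_mem ?_ ?_) ?_
      · exact Submodule.mem_sup_right h1
      · exact Submodule.mem_sup_left (Submodule.mem_sup_right h2)
      · exact Submodule.mem_sup_right h3
    exact ⟨le_top, fun b _ x hx => ⟨hleft (mem_prodSub trivial hx), hright (mem_prodSub hx trivial)⟩⟩
  have hx₀J : x₀ ∈ J := by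
    rcases hsimple.2 J hJideal with h | h
    · exfalso
      -- all products with x₀ vanish, so span{x₀} is an ideal, hence ⊤, contradiction
      have hax : ∀ a : A, a * x₀ = 0 := by
        intro a
        have : a * x₀ ∈ P1 := mem_prodSub trivial hx₀X
        have : a * x₀ ∈ J := Submodule.mem_sup_left (Submodule.mem_sup_left this)
        rw [h] at this; simpa using this
      have hxa : ∀ a : A, x₀ * a = 0 := by
        intro a
        have : x₀ * a ∈ P2 := mem_prodSub hx₀X trivial
        have : x₀ * a ∈ J := Submodule.mem_sup_left (Submodule.mem_sup_right this)
        rw [h] at this; simpa using this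
      have hXideal : IsIdealIn X ⊤ := by
        refine ⟨le_top, fun b _ x hx => ?_⟩
        obtain ⟨c, rfl⟩ := Submodule.mem_span_singleton.1 hx
        constructor
        · rw [mul_smul_comm, hax, smul_zero]; exact zero_mem _
        · rw [smul_mul_assoc, hxa, smul_zero]; exact zero_mem _
      rcases hsimple.2 X hXideal with hX0 | hXtop
      · exact hx₀ (by rw [hX0] at hx₀X; simpa using hx₀X)
      · have hu : u ∈ X := by rw [hXtop]; trivial
        obtain ⟨c, hc⟩ := Submodule.mem_span_singleton.1 hu
        apply huv
        show u * v = 0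
        rw [← hc, smul_mul_assoc, hxa, smul_zero]
    · rw [h]; trivial
  -- transfer to the local system
  set N : Γ → Submodule F A := fun α =>
    prodSub (S α) X ⊔ prodSub X (S α) ⊔ prodSub (prodSub (S α) X) (S α) with hN
  have hNmono : ∀ {α β}, S α ≤ S β → N α ≤ N β := by
    intro α β h
    exact sup_le_sup (sup_le_sup (prodSub_mono h le_rfl) (prodSub_mono le_rfl h))
      (prodSub_mono (prodSub_mono h le_rfl) h)
  have hNdir : Directed (· ≤ ·) N := by
    intro α β
    obtain ⟨γ, h1, h2⟩ := hdir α β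
    exact ⟨γ, hNmono h1, hNmono h2⟩
  have hJZ : J ≤ ⨆ α, N α := by
    rw [hJ]
    refine sup_le (sup_le ?_ ?_) ?_
    · refine prodSub_le fun a _ x hx => ?_
      obtain ⟨α, hα⟩ := hcov a
      exact le_iSup N α (Submodule.mem_sup_left (Submodule.mem_sup_left (mem_prodSub hα hx)))
    · refine prodSub_le fun x hx a _ => ?_
      obtain ⟨α, hα⟩ := hcov a
      exact le_iSup N α (Submodule.mem_sup_left (Submodule.mem_sup_right (mem_prodSub hx hα)))
    · refine prodSub_le fun z hz a _ => ?_
      induction hz using Submodule.span_induction with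
      | mem z hz =>
          obtain ⟨b, _, x, hx, rfl⟩ := hz
          obtain ⟨α, hα⟩ := hcov b
          obtain ⟨β, hβ⟩ := hcov a
          obtain ⟨γ, h1, h2⟩ := hdir α β
          exact le_iSup N γ (Submodule.mem_sup_right
            (mem_prodSub (mem_prodSub (h1 hα) hx) (h2 hβ)))
      | zero => rw [zero_mul]; exact zero_mem _
      | add p q _ _ hp hq => rw [add_mul]; exact add_mem hp hq
      | smul c p _ hp => rw [smul_mul_assoc]; exact Submodule.smul_mem _ _ hp
  have hx₀Z : x₀ ∈ ⨆ α, N α := hJZ hx₀J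
  obtain ⟨α₀, hα₀⟩ := (Submodule.mem_iSup_of_directed N hNdir).1 hx₀Z
  obtain ⟨β₀, hβ₀⟩ := hcov x₀
  obtain ⟨γ₀, hg1, hg2⟩ := hdir α₀ β₀
  have hx₀N : x₀ ∈ N γ₀ := hNmono hg1 hα₀
  have hx₀B : x₀ ∈ S γ₀ := hg2 hβ₀
  -- x₀ lies in all powers of S γ₀
  have hx₀pows : ∀ n, x₀ ∈ pows (S γ₀) n := by
    intro n
    induction n with
    | zero => exact hx₀B
    | succ n ih =>
        have hXle : X ≤ pows (S γ₀) n := by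
          rw [hX, Submodule.span_le, Set.singleton_subset_iff]; exact ih
        have hNle : N γ₀ ≤ pows (S γ₀) (n + 1) := by
          refine sup_le (sup_le ?_ ?_) ?_
          · exact prodSub_mono le_rfl hXle
          · have : prodSub (pows (S γ₀) n) (pows (S γ₀) 0) = pows (S γ₀) (n + 0 + 1) :=
              prodSub_pows _ n 0
            calc prodSub X (S γ₀) ≤ prodSub (pows (S γ₀) n) (pows (S γ₀) 0) :=
                  prodSub_mono hXle le_rfl
              _ = pows (S γ₀) (n + 1) := this
          · calc prodSub (prodSub (S γ₀) X) (S γ₀)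
                ≤ prodSub (prodSub (S γ₀) (pows (S γ₀) n)) (pows (S γ₀) 0) :=
                  prodSub_mono (prodSub_mono le_rfl hXle) le_rfl
              _ = prodSub (pows (S γ₀) (n + 1)) (pows (S γ₀) 0) := rfl
              _ = pows (S γ₀) (n + 1 + 0 + 1) := prodSub_pows _ (n + 1) 0
              _ ≤ pows (S γ₀) (n + 1) := pows_antitone (hsub γ₀) (by omega)
        exact hNle hx₀N
  have hx₀U : x₀ ∈ U := hmemU.2 ⟨γ₀, Submodule.mem_iInf _ |>.2 hx₀pows⟩
  -- U = ⊤ by simplicity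
  have hUtop : U = ⊤ := by
    rcases hsimple.2 U hUideal with h | h
    · exact absurd (by rw [h] at hx₀U; simpa using hx₀U) hx₀
    · exact h
  refine ⟨⟨hTsub, ?_, ?_, ?_⟩, fun α => perfect_inf (hsub α) (hfd α)⟩
  · intro α
    haveI := hfd α
    exact Submodule.finiteDimensional_of_le (hTle α)
  · intro x
    exact hmemU.1 (by rw [hUtop]; trivial)
  · intro α β
    obtain ⟨γ, h1, h2⟩ := hdir α β
    exact ⟨γ, hTmono h1, hTmono h2⟩
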